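/- If p/q = [a_1,...,a_n] in lowest terms and (a_1,...,a_n) is palindromic with n ≥ 3, then (q² + (−1)^n)/p is the numerator of the continued fraction [a_2, a_3, ..., a_{n-1}]. -/

import Mathlib

/-- Value of the continued fraction [a₁,...,aₙ] = a₁ + 1/(a₂ + 1/(... + 1/aₙ)). -/
def cfQ : List ℚ → ℚ
  | [] => 0
  | [a] => a
  | a :: b :: l => a + 1 / cfQ (b :: l)

/-- The continuant: `cont [a₁,...,aₙ]` is the numerator N[a₁,...,aₙ] of the
continued fraction [a₁,...,aₙ], with N[] = 1. -/
def cont : List ℕ → ℕ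
  | [] => 1
  | [a] => a
  | a :: b :: l => a * cont (b :: l) + cont l

/-!
Write `N(a₁..aₙ)` for the continuant. The product `M = ∏ᵢ !![aᵢ, 1; 1, 0]` is
`!![N(a₁..aₙ), N(a₁..aₙ₋₁); N(a₂..aₙ), N(a₂..aₙ₋₁)]`. Transposing `M` reverses the sequence, so
continuants are invariant under reversal and, for a palindrome, `N(a₁..aₙ₋₁) = N(a₂..aₙ)`. Taking
determinants gives `N(a₁..aₙ) N(a₂..aₙ₋₁) - N(a₁..aₙ₋₁) N(a₂..aₙ) = (-1)ⁿ`. Finally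
`[a₁,...,aₙ] = N(a₁..aₙ) / N(a₂..aₙ)` with coprime numerator and denominator (Euclid's algorithm
runs along the recursion), so `p = N(a₁..aₙ)`, `q = N(a₂..aₙ)` and the determinant identity reads
`p N(a₂..aₙ₋₁) = q² + (-1)ⁿ`.
-/

open Matrix

theorem cont_pos {l : List ℕ} (hl : ∀ x ∈ l, 0 < x) : 0 < cont l := by
  induction l using cont.induct with
  | case1 => exact Nat.one_pos
  | case2 a => exact hl a (by simp)
  | case3 a b m ih _ =>
    exact Nat.add_pos_left (Nat.mul_pos (hl a (by simp)) (ih fun x hx => hl x (by simp_all))) _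

theorem cont_coprime_cont_tail (l : List ℕ) : (cont l).Coprime (cont l.tail) := by
  induction l using cont.induct with
  | case1 => simp [cont]
  | case2 a => simp [cont]
  | case3 a b m ih _ =>
    rw [List.tail_cons] at ih ⊢
    exact (Nat.coprime_mul_right_add_left _ _ _).2 ih.symm

def contMat (l : List ℕ) : Matrix (Fin 2) (Fin 2) ℤ :=
  (l.map fun a : ℕ => !![(a : ℤ), 1; 1, 0]).prod

theorem contMat_cons (a : ℕ) (l : List ℕ) :
    contMat (a :: l) = !![(a : ℤ), 1; 1, 0] * contMat l :=
  List.prod_cons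

theorem contMat_cons_one (a : ℕ) (l : List ℕ) (j : Fin 2) :
    contMat (a :: l) 1 j = contMat l 0 j := by
  simp [contMat_cons, mul_apply]

theorem contMat_zero_zero (l : List ℕ) : contMat l 0 0 = cont l := by
  induction l using cont.induct with
  | case1 => simp [contMat, cont]
  | case2 a => simp [contMat, cont]
  | case3 a b m ih ih' =>
    rw [contMat_cons, mul_apply, Fin.sum_univ_two, contMat_cons_one, ih, ih', cont]
    simp

theorem contMat_one_zero {l : List ℕ} (hl : l ≠ []) : contMat l 1 0 = cont l.tail := by
  obtain ⟨a, m, rfl⟩ := List.exists_cons_of_ne_nil hl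
  rw [contMat_cons_one, contMat_zero_zero, List.tail_cons]

theorem contMat_transpose (l : List ℕ) : (contMat l)ᵀ = contMat l.reverse := by
  rw [contMat, transpose_list_prod, contMat, List.map_reverse, List.map_map]
  congr 3
  ext a : 1
  simp [← Matrix.ext_iff, Fin.forall_fin_two]

theorem det_contMat (l : List ℕ) : (contMat l).det = (-1) ^ l.length := by
  induction l with
  | nil => simp [contMat]
  | cons a l ih =>
    rw [contMat_cons, det_mul, ih, det_fin_two_of, List.length_cons, pow_succ]
    ring

theorem cont_reverse (l : List ℕ) : cont l.reverse = cont l := by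
  have h := contMat_zero_zero l.reverse
  rw [← contMat_transpose, transpose_apply, contMat_zero_zero] at h
  exact_mod_cast h.symm

theorem contMat_zero_one {l : List ℕ} (hl : l ≠ []) : contMat l 0 1 = cont l.dropLast := by
  rw [show contMat l 0 1 = (contMat l)ᵀ 1 0 from rfl, contMat_transpose,
    contMat_one_zero (List.reverse_ne_nil_iff.2 hl), List.tail_reverse, cont_reverse]

theorem contMat_one_one {l : List ℕ} (hl : 2 ≤ l.length) :
    contMat l 1 1 = cont l.tail.dropLast := by
  cases l with
  | nil => simp at hl
  | cons a m =>
    rw [contMat_cons_one, contMat_zero_one (List.ne_nil_of_length_pos (by simp at hl; omega)),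
      List.tail_cons]

theorem cont_mul_sub_mul {l : List ℕ} (hl : 2 ≤ l.length) :
    (cont l : ℤ) * cont l.tail.dropLast - cont l.dropLast * cont l.tail = (-1) ^ l.length := by
  have hne : l ≠ [] := List.ne_nil_of_length_pos (by omega)
  rw [← det_contMat, det_fin_two, contMat_zero_zero, contMat_one_one hl, contMat_zero_one hne,
    contMat_one_zero hne]

theorem cont_dropLast_of_reverse_eq {l : List ℕ} (h : l.reverse = l) :
    cont l.dropLast = cont l.tail := by
  rw [← cont_reverse l.dropLast, ← List.tail_reverse, h]

theorem cfQ_map_natCast {l : List ℕ} (hl : l ≠ []) (hpos : ∀ x ∈ l, 0 < x) :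
    cfQ (l.map (↑)) = cont l / cont l.tail := by
  induction l using cont.induct with
  | case1 => contradiction
  | case2 a => simp [cfQ, cont]
  | case3 a b m ih _ =>
    have hb : (cont (b :: m) : ℚ) ≠ 0 := by
      exact_mod_cast (cont_pos fun x hx => hpos x (List.mem_cons_of_mem a hx)).ne'
    rw [List.map_cons, List.map_cons, cfQ, ← List.map_cons, ih (List.cons_ne_nil b m)
      fun x hx => hpos x (List.mem_cons_of_mem a hx), cont]
    simp only [List.tail_cons]
    field_simp
    push_cast
    ring

theorem cfQ_map_natCast_num_den {l : List ℕ} (hl : l ≠ []) (hpos : ∀ x ∈ l, 0 < x) :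
    (cfQ (l.map (↑))).num = cont l ∧ ((cfQ (l.map (↑))).den : ℤ) = cont l.tail := by
  have hq : (0 : ℤ) < cont l.tail := by
    exact_mod_cast cont_pos fun x hx => hpos x (List.mem_of_mem_tail hx)
  have hcop : (cont l : ℤ).natAbs.Coprime (cont l.tail : ℤ).natAbs := cont_coprime_cont_tail l
  have hval : cfQ (l.map (↑)) = ((cont l : ℤ) : ℚ) / ((cont l.tail : ℤ) : ℚ) := by
    rw [cfQ_map_natCast hl hpos, Int.cast_natCast, Int.cast_natCast]
  rw [hval, Rat.num_div_eq_of_coprime hq hcop, Rat.den_div_eq_of_coprime hq hcop]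
  exact ⟨rfl, rfl⟩

/-- If p/q = [a₁,...,aₙ] in lowest terms, (a₁,...,aₙ) palindromic, n ≥ 3, then
(q² + (−1)ⁿ)/p is the numerator of the continued fraction [a₂,...,aₙ₋₁]. -/
theorem stmt11 (l : List ℕ) (hl : 3 ≤ l.length) (hpos : ∀ x ∈ l, 0 < x)
    (hpal : l.reverse = l) :
    (cont (l.tail.dropLast) : ℤ) * (cfQ (l.map (fun x => (x : ℚ)))).num =
      ((cfQ (l.map (fun x => (x : ℚ)))).den : ℤ) ^ 2 + (-1 : ℤ) ^ l.length := by
  -- `l.map (fun x => (x : ℚ))` elaborates as the identity map on the monadic lift of `l` to `List ℚ`.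
  have hcast : l.map (fun x => (x : ℚ)) = l.map (↑) := by
    simp only [List.pure_def, List.bind_eq_flatMap, List.map_id_fun', id_eq, ← List.map_eq_flatMap]
  obtain ⟨hnum, hden⟩ := cfQ_map_natCast_num_den (List.ne_nil_of_length_pos (by omega)) hpos
  have hdet := cont_mul_sub_mul (l := l) (by omega)
  rw [cont_dropLast_of_reverse_eq hpal] at hdet
  rw [hcast, hnum, hden]
  linear_combination hdet
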